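/- Every binary string ω of length n has a unique 1-prefix normal form: there exists exactly one 1-prefix normal word ω' of length n such that for every 1 ≤ l ≤ n, the maximum number of 1s over length-l substrings of ω' equals the maximum number of 1s over length-l substrings of ω. -/

import Mathlib

def onesIn (w : List Bool) (i l : ℕ) : ℕ := ((w.drop i).take l).count true

def maxOnes (w : List Bool) (l : ℕ) : ℕ :=
  (Finset.range (w.length - l + 1)).sup (fun i => onesIn w i l)

def IsPrefixNormal (w : List Bool) : Prop :=
  ∀ l, 1 ≤ l → l ≤ w.length → (w.take l).count true = maxOnes w l

/-!
The function `f l = maxOnes w l` vanishes at `0`, is monotone and subadditive, so it grows by `0`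
or `1` at each step. The word whose `l`-th letter records whether `f` grows at `l` therefore has
prefix counts `f`; by subadditivity no window of length `l` beats the prefix, so its `maxOnes` is
`f` as well and it is prefix normal. Uniqueness holds because a prefix normal word's prefix counts
are its `maxOnes`, and a binary word is determined by its prefix counts.
-/

section Windows

variable (w : List Bool)

lemma onesIn_add (i a b : ℕ) : onesIn w i (a + b) = onesIn w i a + onesIn w (i + a) b := by
  rw [onesIn, onesIn, onesIn, List.take_add, List.count_append, List.drop_drop]

lemma onesIn_le (i l : ℕ) : onesIn w i l ≤ l :=
  List.count_le_length.trans (List.length_take_le _ _)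

lemma onesIn_mono (i : ℕ) {a b : ℕ} (h : a ≤ b) : onesIn w i a ≤ onesIn w i b := by
  rw [onesIn, onesIn, ← min_eq_left h, ← List.take_take]
  exact (List.take_sublist _ _).count_le _

lemma count_take_add (i l : ℕ) :
    (w.take (i + l)).count true = (w.take i).count true + onesIn w i l := by
  rw [List.take_add, List.count_append, onesIn]

lemma onesIn_le_maxOnes {i l : ℕ} (h : i + l ≤ w.length) : onesIn w i l ≤ maxOnes w l :=
  Finset.le_sup (f := fun i => onesIn w i l) (Finset.mem_range.mpr (by omega))

lemma maxOnes_le {l m : ℕ} (h : ∀ i, i + l ≤ w.length → onesIn w i l ≤ m) (hl : l ≤ w.length) :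
    maxOnes w l ≤ m :=
  Finset.sup_le fun i hi => h i (by rw [Finset.mem_range] at hi; omega)

lemma maxOnes_zero : maxOnes w 0 = 0 := by
  simp [maxOnes, onesIn]

lemma maxOnes_one_le : maxOnes w 1 ≤ 1 :=
  Finset.sup_le fun i _ => onesIn_le w i 1

lemma maxOnes_add_le {a b : ℕ} (h : a + b ≤ w.length) :
    maxOnes w (a + b) ≤ maxOnes w a + maxOnes w b :=
  maxOnes_le w (fun i hi => by
    rw [onesIn_add]
    exact add_le_add (onesIn_le_maxOnes w (by omega)) (onesIn_le_maxOnes w (by omega))) h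

lemma maxOnes_mono {a b : ℕ} (hab : a ≤ b) (hb : b ≤ w.length) : maxOnes w a ≤ maxOnes w b := by
  refine maxOnes_le w (fun i hi => ?_) (hab.trans hb)
  -- slide the window of length `a` at `i` left to `j` until a window of length `b` at `j` fits
  set j := min i (w.length - b)
  calc onesIn w i a ≤ onesIn w i (b - (i - j)) := onesIn_mono w i (by omega)
    _ ≤ onesIn w j (i - j) + onesIn w (j + (i - j)) (b - (i - j)) := by
        rw [show j + (i - j) = i by omega]; exact le_add_self
    _ = onesIn w j b := by rw [← onesIn_add]; congr 1; omega
    _ ≤ maxOnes w b := onesIn_le_maxOnes w (by omega)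

lemma maxOnes_succ_le {l : ℕ} (h : l + 1 ≤ w.length) : maxOnes w (l + 1) ≤ maxOnes w l + 1 :=
  (maxOnes_add_le w h).trans (Nat.add_le_add_left (maxOnes_one_le w) _)

lemma maxOnes_eq_count_take_of_subadditive
    (hsub : ∀ i l, i + l ≤ w.length →
      (w.take (i + l)).count true ≤ (w.take i).count true + (w.take l).count true)
    {l : ℕ} (hl : l ≤ w.length) : maxOnes w l = (w.take l).count true := by
  refine le_antisymm (maxOnes_le w (fun i hi => ?_) hl) ?_
  · have := count_take_add w i l
    have := hsub i l hi
    omega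
  · simpa [onesIn] using onesIn_le_maxOnes w (i := 0) (l := l) (by omega)

end Windows

lemma List.eq_of_count_true_take {u v : List Bool} (hlen : u.length = v.length)
    (hcount : ∀ l ≤ u.length, (u.take l).count true = (v.take l).count true) : u = v := by
  induction u generalizing v with
  | nil => exact (List.length_eq_zero_iff.mp hlen.symm).symm
  | cons a u ih =>
    obtain _ | ⟨c, v⟩ := v
    · simp at hlen
    have hac : a = c := by
      have := hcount 1 (by simp)
      cases a <;> cases c <;> simp_all
    subst hac
    refine congrArg _ (ih (by simpa using hlen) fun l hl => ?_)
    have := hcount (l + 1) (by simp; omega)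
    simp only [List.take_succ_cons, List.count_cons] at this
    omega

def wordOfIncrements (f : ℕ → ℕ) (n : ℕ) : List Bool :=
  (List.range n).map fun l => decide (f l < f (l + 1))

lemma length_wordOfIncrements (f : ℕ → ℕ) (n : ℕ) : (wordOfIncrements f n).length = n := by
  simp [wordOfIncrements]

lemma count_true_take_wordOfIncrements {f : ℕ → ℕ} {n : ℕ} (h0 : f 0 = 0)
    (hstep : ∀ l, l + 1 ≤ n → f l ≤ f (l + 1) ∧ f (l + 1) ≤ f l + 1) {l : ℕ} (hl : l ≤ n) :
    ((wordOfIncrements f n).take l).count true = f l := by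
  rw [wordOfIncrements, ← List.map_take, List.take_range, min_eq_left hl]
  induction l with
  | zero => simp [h0]
  | succ l ih =>
    rw [List.range_succ, List.map_append, List.count_append, ih (by omega)]
    obtain ⟨hmono, hsucc⟩ := hstep l hl
    by_cases hc : f l < f (l + 1) <;> simp [hc] <;> omega

theorem unique_prefix_normal_form (w : List Bool) :
    ∃! w' : List Bool, w'.length = w.length ∧ IsPrefixNormal w' ∧
      ∀ l, 1 ≤ l → l ≤ w.length → maxOnes w' l = maxOnes w l := by
  set n := w.length
  set w' := wordOfIncrements (maxOnes w) n
  have hlen : w'.length = n := length_wordOfIncrements _ _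
  have hcount : ∀ l ≤ n, (w'.take l).count true = maxOnes w l :=
    fun l => count_true_take_wordOfIncrements (maxOnes_zero w)
      fun l hl => ⟨maxOnes_mono w l.le_succ hl, maxOnes_succ_le w hl⟩
  have hmax : ∀ l ≤ n, maxOnes w' l = maxOnes w l := fun l hl => by
    refine (maxOnes_eq_count_take_of_subadditive w' (fun i k hik => ?_) (hlen ▸ hl)).trans
      (hcount l hl)
    rw [hlen] at hik
    rw [hcount _ hik, hcount i (by omega), hcount k (by omega)]
    exact maxOnes_add_le w hik
  refine ⟨w', ⟨hlen, fun l _ hl => ?_, fun l _ hl => hmax l hl⟩, ?_⟩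
  · rw [hlen] at hl
    rw [hmax l hl, hcount l hl]
  rintro u ⟨hulen, hu, hueq⟩
  refine List.eq_of_count_true_take (hulen.trans hlen.symm) fun l hl => ?_
  rw [hulen] at hl
  rcases Nat.eq_zero_or_pos l with rfl | hpos
  · simp
  · rw [hu l hpos (hulen ▸ hl), hueq l hpos hl, hcount l hl]
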